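/- arXiv:1002.3894 — 3 statements merged into one kernel-verified Lean document; each statement's English description precedes it below -/
import Mathlib

section
/- For every real x with 0 < |x| ≤ π, the real part of g(ix) = (e^{ix} - 1 - ix + x²/2)/(-x²) is bounded below by -π²/24. -/
open Complex

/-- For `0 < |x| ≤ π`, the real part of
`g(ix) = (e^{ix} - 1 - ix + x²/2)/(-x²)` is bounded below by `-π²/24`. -/
theorem re_g_lower_bound (x : ℝ) (hx0 : 0 < |x|) (hxπ : |x| ≤ Real.pi) :
    -(Real.pi ^ 2 / 24) ≤
      ((Complex.exp (Complex.I * x) - 1 - Complex.I * x + (x : ℂ) ^ 2 / 2) /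
        (-(x : ℂ) ^ 2)).re := by
  have hx : x ≠ 0 := by simpa using hx0.ne'
  have hx2 : (0:ℝ) < x ^ 2 := by positivity
  have hre : ((Complex.exp (Complex.I * x) - 1 - Complex.I * x + (x : ℂ) ^ 2 / 2) /
        (-(x : ℂ) ^ 2)).re = (Real.cos x - 1 + x ^ 2 / 2) / (-x ^ 2) := by
    have h1 : (-(x : ℂ) ^ 2) = ((-x ^ 2 : ℝ) : ℂ) := by push_cast; ring
    rw [h1, Complex.div_ofReal_re]
    congr 1
    have h2 : Complex.I * (x:ℂ) = (x:ℂ) * Complex.I := by ring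
    rw [h2, Complex.exp_mul_I]
    simp [Complex.cos_ofReal_re, Complex.sin_ofReal_re, ← Complex.ofReal_pow]
  rw [hre, div_neg]
  have hcos : Real.cos x ≤ 1 - 2 / Real.pi ^ 2 * x ^ 2 :=
    Real.cos_le_one_sub_mul_cos_sq hxπ
  have hπ2 : (0:ℝ) < Real.pi ^ 2 := by positivity
  have key : (Real.cos x - 1 + x ^ 2 / 2) / x ^ 2 ≤ Real.pi ^ 2 / 24 := by
    rw [div_le_iff₀ hx2]
    have h3 : 2 / Real.pi ^ 2 * x ^ 2 * Real.pi ^ 2 = 2 * x ^ 2 := by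
      field_simp
    nlinarith [sq_nonneg (Real.pi ^ 2 - 6), mul_pos hx2 hπ2,
      mul_le_mul_of_nonneg_right hcos hπ2.le]
  linarith
end

section
/- For every j ≥ 0, (log(1+x) - x + x²/2)^j / j! = Σ_{l≥3j} (-1)^{l-j} d₃(l,j) x^l / l! as formal power series. -/
/-- `d3 n k`: the number of permutations of an `n`-element set having exactly `k` cycles,
all of length at least `3` (in particular, without fixed points). -/
noncomputable def d3 (n k : ℕ) : ℕ :=
  Nat.card {σ : Equiv.Perm (Fin n) //
    σ.support = Finset.univ ∧ σ.cycleType.card = k ∧ ∀ i ∈ σ.cycleType, 3 ≤ i}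

/-- The formal power series `log(1+X) = Σ_{n≥1} (-1)^{n+1} X^n/n`. -/
noncomputable def logOneAdd : PowerSeries ℚ :=
  PowerSeries.mk fun n => if n = 0 then 0 else (-1 : ℚ) ^ (n + 1) / n

/-!
Both sides equal `1` for `j = 0`; for `j ≥ 1` both vanish at `0`, so it suffices that both
satisfy `F_j' = A' · F_{j-1}`, where `A = log(1+x) - x + x²/2` and `A' = x²/(1+x)`.
For the left side this is the chain rule. For the right side it is the recurrence
`d₃(n+1, j+1) = Σ_{k≥2} n(n-1)⋯(n-k+1) · d₃(n-k, j)`: removing the cycle through a fixed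
point leaves a permutation of the other `n - k` points, and a cycle of length `k + 1`
through that point is the same as the ordered list of its other `k` points.
-/

open Equiv Finset

def IsD3CycleType (k : ℕ) (m : Multiset ℕ) : Prop :=
  Multiset.card m = k ∧ ∀ i ∈ m, 3 ≤ i

theorem isD3CycleType_add_singleton {j l : ℕ} {m : Multiset ℕ} (hl : 3 ≤ l) :
    IsD3CycleType (j + 1) (m + {l}) ↔ IsD3CycleType j m := by
  simp [IsD3CycleType, or_imp, forall_and, hl]

theorem isD3CycleType_zero_iff {m : Multiset ℕ} : IsD3CycleType 0 m ↔ m = 0 :=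
  ⟨fun h => Multiset.card_eq_zero.mp h.1, by rintro rfl; simp [IsD3CycleType]⟩

def List.consNodupEquivEmbedding {α : Type*} (a : α) (k : ℕ) :
    {l : List α // (a :: l).Nodup ∧ l.length = k} ≃ (Fin k ↪ {x // x ≠ a}) where
  toFun l := by
    obtain ⟨l, hnd, hlen⟩ := l
    rw [List.nodup_cons] at hnd
    refine ⟨fun i => ⟨l[i], fun h => hnd.1 (h ▸ List.getElem_mem _)⟩, fun i j h => ?_⟩
    exact Fin.ext ((hnd.2.getElem_inj_iff).mp (congrArg Subtype.val h))
  invFun f := ⟨List.ofFn fun i => (f i : α), by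
    refine ⟨List.nodup_cons.mpr ⟨fun h => ?_, ?_⟩, List.length_ofFn⟩
    · obtain ⟨i, hi⟩ := List.mem_ofFn.mp h
      exact (f i).2 hi
    · exact List.nodup_ofFn.mpr (Subtype.val_injective.comp f.injective)⟩
  left_inv l := by
    obtain ⟨l, hnd, rfl⟩ := l
    ext1
    exact List.ext_getElem (by simp) fun i _ _ => by simp
  right_inv f := by
    ext i
    simp

namespace Equiv.Perm

variable {α β : Type*} [Fintype α] [DecidableEq α] [Fintype β] [DecidableEq β]

theorem cycleType_permCongr (e : α ≃ β) (g : Perm α) :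
    (e.permCongr g).cycleType = g.cycleType := by
  have : e.permCongr g = g.extendDomain (e.trans (subtypeUnivEquiv fun _ => trivial).symm) := by
    ext b
    rw [extendDomain_apply_subtype _ _ trivial]
    simp [subtypeUnivEquiv]
  rw [this, cycleType_extendDomain]

theorem support_eq_univ_iff_sum_cycleType (σ : Perm α) :
    σ.support = univ ↔ σ.cycleType.sum = Fintype.card α := by
  rw [sum_cycleType, card_eq_iff_eq_univ]

theorem card_support_eq_univ_congr (e : α ≃ β) (P : Multiset ℕ → Prop) :
    Nat.card {σ : Perm α // σ.support = univ ∧ P σ.cycleType} =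
      Nat.card {σ : Perm β // σ.support = univ ∧ P σ.cycleType} :=
  Nat.card_congr <| e.permCongr.subtypeEquiv fun σ => by
    simp only [support_eq_univ_iff_sum_cycleType, cycleType_permCongr, Fintype.card_congr e]

theorem card_support_eq_congr_subtype (s : Finset α) (P : Multiset ℕ → Prop) :
    Nat.card {σ : Perm α // σ.support = s ∧ P σ.cycleType} =
      Nat.card {σ : Perm s // σ.support = univ ∧ P σ.cycleType} := by
  symm
  refine Nat.card_congr <| ((Perm.subtypeEquivSubtypePerm (· ∈ s)).subtypeEquiv
    (q := fun σ => σ.1.support = s ∧ P σ.1.cycleType) fun σ => ?_).trans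
    (subtypeSubtypeEquivSubtype (q := fun σ : Perm α => σ.support = s ∧ P σ.cycleType)
      fun h a ha => notMem_support.mp (h.1 ▸ ha))
  simp only [subtypeEquivSubtypePerm_apply_coe, cycleType_ofSubtype, support_ofSubtype]
  have : univ.map (Function.Embedding.subtype (· ∈ s)) = s := by
    rw [univ_eq_attach, attach_map_val]
  rw [← map_inj (f := Function.Embedding.subtype (· ∈ s)), this]
  -- the two sides differ only in the `Fintype s` instance
  convert Iff.rfl

theorem Disjoint.support_mul_eq_univ_iff {τ c : Perm α} (h : τ.Disjoint c) :
    (τ * c).support = univ ↔ τ.support = c.supportᶜ := by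
  rw [h.support_mul, eq_compl_iff_isCompl, isCompl_iff, codisjoint_iff,
    and_iff_right (disjoint_iff_disjoint_support.mp h)]
  rfl

theorem IsCycle.cycleOf_mul_eq_self_iff {c : Perm α} {a : α} (hc : c.IsCycle)
    (ha : a ∈ c.support) (τ : Perm α) : (τ * c).cycleOf a = c ↔ τ.Disjoint c := by
  constructor
  · intro h
    have ha' : a ∈ (τ * c).support := by
      rw [mem_support, ne_eq, ← cycleOf_eq_one_iff, h]
      exact hc.ne_one
    have hmem := cycleOf_mem_cycleFactorsFinset_iff.mpr ha'
    rw [h] at hmem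
    simpa using disjoint_mul_inv_of_mem_cycleFactorsFinset hmem
  · intro hd
    refine (cycle_is_cycleOf ha ?_).symm
    rw [hd.cycleFactorsFinset_mul_eq_union, hc.cycleFactorsFinset_eq_singleton]
    exact mem_union_right _ (mem_singleton_self c)

theorem card_support_cycleOf_mem_cycleType {σ : Perm α} {a : α} (ha : a ∈ σ.support) :
    #(σ.cycleOf a).support ∈ σ.cycleType := by
  rw [cycleType_def]
  exact Multiset.mem_map_of_mem _ (cycleOf_mem_cycleFactorsFinset_iff.mpr ha)

theorem cons_tail_toList {p : Perm α} {a : α} (ha : a ∈ p.support) :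
    a :: (p.toList a).tail = p.toList a := by
  refine List.cons_head?_tail ?_
  rw [List.head?_eq_getElem?, List.getElem?_eq_getElem (length_toList_pos_of_mem_support _ _ ha),
    toList_getElem_zero _ _ ha]
  rfl

def toListTailEquiv (a : α) {k : ℕ} (hk : k ≠ 0) :
    {c : Perm α // c.IsCycle ∧ a ∈ c.support ∧ #c.support = k + 1} ≃
      {l : List α // (a :: l).Nodup ∧ l.length = k} where
  toFun c := ⟨(c.1.toList a).tail, by
    obtain ⟨c, hc, ha, hcard⟩ := c
    rw [cons_tail_toList ha]
    refine ⟨nodup_toList c a, ?_⟩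
    rw [List.length_tail, length_toList, hc.cycleOf_eq (mem_support.mp ha), hcard]
    rfl⟩
  invFun l := ⟨(a :: l.1).formPerm, by
    obtain ⟨l, hnd, hlen⟩ := l
    have hl : 2 ≤ (a :: l).length := by simp; omega
    have hsupp := List.support_formPerm_of_nodup _ hnd (fun x h => by simp [h] at hl)
    refine ⟨List.isCycle_formPerm hnd hl, by simp [hsupp], ?_⟩
    rw [hsupp, List.toFinset_card_of_nodup hnd, List.length_cons, hlen]⟩
  left_inv c := by
    obtain ⟨c, hc, ha, -⟩ := c
    ext1
    simp only
    rw [cons_tail_toList ha, formPerm_toList, hc.cycleOf_eq (mem_support.mp ha)]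
  right_inv l := by
    obtain ⟨l, hnd, hlen⟩ := l
    ext1
    simp only
    have := toList_formPerm_nontrivial (a :: l) (by simp; omega) hnd
    rw [List.get_eq_getElem, List.getElem_cons_zero] at this
    rw [this, List.tail_cons]

theorem card_isCycle_mem_support (a : α) {k : ℕ} (hk : k ≠ 0) :
    Nat.card {c : Perm α // c.IsCycle ∧ a ∈ c.support ∧ #c.support = k + 1} =
      (Fintype.card α - 1).descFactorial k := by
  rw [Nat.card_congr ((toListTailEquiv a hk).trans (List.consNodupEquivEmbedding a k)),
    Nat.card_eq_fintype_card, Fintype.card_embedding_eq, Fintype.card_fin,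
    Fintype.card_subtype_compl, Fintype.card_subtype_eq]

end Equiv.Perm

open Equiv.Perm

variable {α : Type*} [Fintype α] [DecidableEq α]

theorem d3_card_eq_card_support_eq (s : Finset α) (k : ℕ) :
    d3 #s k = Nat.card {σ : Perm α // σ.support = s ∧ IsD3CycleType k σ.cycleType} := by
  rw [card_support_eq_congr_subtype, card_support_eq_univ_congr s.equivFin]
  rfl

theorem card_cycleOf_eq_d3 {c : Perm α} {a : α} (hc : c.IsCycle) (ha : a ∈ c.support)
    (h3 : 3 ≤ #c.support) (j : ℕ) :
    Nat.card {σ : Perm α //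
        (σ.support = univ ∧ IsD3CycleType (j + 1) σ.cycleType) ∧ σ.cycleOf a = c} =
      d3 (Fintype.card α - #c.support) j := by
  rw [← card_compl, d3_card_eq_card_support_eq]
  refine (Nat.card_congr <| (Equiv.mulRight c).subtypeEquiv fun τ => ?_).symm
  have hsplit : τ.Disjoint c →
      ((τ * c).support = univ ∧ IsD3CycleType (j + 1) (τ * c).cycleType ↔
        τ.support = c.supportᶜ ∧ IsD3CycleType j τ.cycleType) := fun hd => by
    rw [hd.support_mul_eq_univ_iff, hd.cycleType_mul, hc.cycleType,
      isD3CycleType_add_singleton h3]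
  rw [Equiv.coe_mulRight, hc.cycleOf_mul_eq_self_iff ha]
  refine ⟨fun h => ?_, fun h => (hsplit h.2).mp h.1⟩
  have hd : τ.Disjoint c := disjoint_iff_disjoint_support.mpr (h.1 ▸ disjoint_compl_left)
  exact ⟨(hsplit hd).mpr h, hd⟩

open scoped Classical in
theorem sum_isCycle_mem_support {M : Type*} [AddCommMonoid M] (a : α) (f : ℕ → M) :
    ∑ c ∈ univ.filter (fun c : Perm α => c.IsCycle ∧ a ∈ c.support ∧ 3 ≤ #c.support),
        f #c.support =
      ∑ k ∈ range (Fintype.card α),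
        if 2 ≤ k then (Fintype.card α - 1).descFactorial k • f (k + 1) else 0 := by
  set T := univ.filter fun c : Perm α => c.IsCycle ∧ a ∈ c.support ∧ 3 ≤ #c.support
  have hlen : ∀ c ∈ T, #c.support - 1 ∈ range (Fintype.card α) := fun c hc => by
    have h3 := (mem_filter.mp hc).2.2.2
    have := card_le_univ c.support
    rw [mem_range]
    omega
  rw [← sum_fiberwise_of_maps_to hlen]
  refine sum_congr rfl fun k _ => ?_
  have hconst : ∀ c ∈ T.filter (#·.support - 1 = k), f #c.support = f (k + 1) := fun c hc => by
    obtain ⟨hT, hk⟩ := mem_filter.mp hc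
    have := (mem_filter.mp hT).2.2.2
    rw [← hk, Nat.sub_add_cancel (by omega)]
  rw [sum_congr rfl hconst, sum_const]
  split_ifs with hk
  · rw [filter_filter, ← Fintype.card_subtype, ← Nat.card_eq_fintype_card,
      ← card_isCycle_mem_support a (k := k) (by omega)]
    congr 1
    exact Nat.card_congr <| Equiv.subtypeEquivRight fun c =>
      ⟨fun ⟨⟨h1, h2, _⟩, _⟩ => ⟨h1, h2, by omega⟩,
        fun ⟨h1, h2, _⟩ => ⟨⟨h1, h2, by omega⟩, by omega⟩⟩
  · rw [card_eq_zero.mpr (filter_eq_empty_iff.mpr fun c hc => ?_), zero_smul]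
    have := (mem_filter.mp hc).2.2.2
    omega

open scoped Classical in
theorem card_support_eq_univ_isD3CycleType_succ (a : α) (j : ℕ) :
    Nat.card {σ : Perm α // σ.support = univ ∧ IsD3CycleType (j + 1) σ.cycleType} =
      ∑ c ∈ univ.filter (fun c : Perm α => c.IsCycle ∧ a ∈ c.support ∧ 3 ≤ #c.support),
        d3 (Fintype.card α - #c.support) j := by
  set P : Perm α → Prop := fun σ => σ.support = univ ∧ IsD3CycleType (j + 1) σ.cycleType
  have hmaps : ∀ σ ∈ univ.filter P, σ.cycleOf a ∈
      univ.filter (fun c : Perm α => c.IsCycle ∧ a ∈ c.support ∧ 3 ≤ #c.support) := by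
    intro σ hσ
    obtain ⟨hsupp, -, hge⟩ := (mem_filter.mp hσ).2
    have ha : a ∈ σ.support := hsupp ▸ mem_univ a
    exact mem_filter.mpr ⟨mem_univ _, isCycle_cycleOf _ (mem_support.mp ha),
      mem_support_cycleOf_iff.mpr ⟨.refl _ _, ha⟩,
      hge _ (card_support_cycleOf_mem_cycleType ha)⟩
  rw [Nat.card_eq_fintype_card, Fintype.card_subtype, card_eq_sum_card_fiberwise hmaps]
  refine sum_congr rfl fun c hc => ?_
  obtain ⟨hcyc, ha, h3⟩ := (mem_filter.mp hc).2
  rw [filter_filter, ← Fintype.card_subtype, ← Nat.card_eq_fintype_card]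
  exact card_cycleOf_eq_d3 hcyc ha h3 j

theorem d3_succ_succ (n j : ℕ) :
    d3 (n + 1) (j + 1) =
      ∑ k ∈ range (n + 1), if 2 ≤ k then n.descFactorial k * d3 (n - k) j else 0 := by
  have := (card_support_eq_univ_isD3CycleType_succ (0 : Fin (n + 1)) j).trans
    (sum_isCycle_mem_support _ fun l => d3 (Fintype.card (Fin (n + 1)) - l) j)
  simp only [Fintype.card_fin, Nat.add_sub_cancel, smul_eq_mul, Nat.add_sub_add_right] at this
  exact this

theorem d3_zero_right (l : ℕ) : d3 l 0 = if l = 0 then 1 else 0 := by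
  change Nat.card {σ : Perm (Fin l) // σ.support = univ ∧ IsD3CycleType 0 σ.cycleType} = _
  simp only [isD3CycleType_zero_iff, cycleType_eq_zero]
  split_ifs with hl
  · subst hl
    simp
  · refine Nat.card_eq_zero.mpr (.inl ⟨fun ⟨σ, hs, hσ⟩ => hl ?_⟩)
    rw [hσ, support_one] at hs
    simpa using (congrArg card hs).symm

theorem d3_zero_succ (j : ℕ) : d3 0 (j + 1) = 0 := by
  change Nat.card
    {σ : Perm (Fin 0) // σ.support = univ ∧ IsD3CycleType (j + 1) σ.cycleType} = _
  simp [Subsingleton.elim _ (1 : Perm (Fin 0)), IsD3CycleType]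

open PowerSeries

noncomputable def truncLog : ℚ⟦X⟧ := logOneAdd - X + (1 / 2 : ℚ) • X ^ 2

noncomputable def signedD3Egf (j : ℕ) : ℚ⟦X⟧ :=
  mk fun l => (-1 : ℚ) ^ (l + j) * (d3 l j : ℚ) / l.factorial

theorem coeff_truncLog (n : ℕ) :
    coeff n truncLog = if n < 3 then 0 else (-1 : ℚ) ^ (n + 1) / n := by
  rw [truncLog, map_add, map_sub, coeff_smul, logOneAdd, coeff_mk, coeff_X, coeff_X_pow]
  match n with
  | 0 | 1 | 2 => norm_num
  | n + 3 => simp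

theorem constantCoeff_truncLog : constantCoeff truncLog = 0 := by
  rw [← coeff_zero_eq_constantCoeff_apply, coeff_truncLog]
  rfl

theorem coeff_derivative_truncLog (n : ℕ) :
    coeff n (d⁄dX ℚ truncLog) = if 2 ≤ n then (-1 : ℚ) ^ n else 0 := by
  rw [coeff_derivative, coeff_truncLog]
  split_ifs with h3 h2 h2
  · omega
  · simp
  · push_cast
    field_simp
    ring
  · omega

theorem derivative_C_inv_factorial_mul_pow_succ (f : ℚ⟦X⟧) (j : ℕ) :
    d⁄dX ℚ (C (1 / (j + 1).factorial : ℚ) * f ^ (j + 1)) =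
      d⁄dX ℚ f * (C (1 / j.factorial : ℚ) * f ^ j) := by
  rw [Derivation.leibniz, derivative_C, smul_zero, add_zero, derivative_pow, smul_eq_mul,
    Nat.add_sub_cancel, Nat.factorial_succ]
  have : C (1 / ((j + 1) * j.factorial : ℕ) : ℚ) * ((j + 1 : ℕ) : ℚ⟦X⟧) =
      C (1 / j.factorial : ℚ) := by
    rw [← map_natCast (C (R := ℚ)), ← map_mul]
    congr 1
    push_cast
    field_simp
  rw [← this]
  ring

theorem signedD3Egf_zero : signedD3Egf 0 = 1 := by
  ext l
  rw [signedD3Egf, coeff_mk, d3_zero_right, coeff_one]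
  split_ifs <;> simp_all

theorem constantCoeff_signedD3Egf_succ (j : ℕ) : constantCoeff (signedD3Egf (j + 1)) = 0 := by
  rw [← coeff_zero_eq_constantCoeff_apply, signedD3Egf, coeff_mk, d3_zero_succ]
  simp

theorem neg_one_pow_mul_descFactorial_div_factorial {n k : ℕ} (hk : k ≤ n) (j : ℕ) (d : ℚ) :
    (-1 : ℚ) ^ (n + j) * (n.descFactorial k * d) / n.factorial =
      (-1) ^ k * ((-1) ^ (n - k + j) * d / (n - k).factorial) := by
  have hfac : ((n - k).factorial : ℚ) * n.descFactorial k = n.factorial := by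
    exact_mod_cast Nat.factorial_mul_descFactorial hk
  have hsign : (-1 : ℚ) ^ (n + j) = (-1) ^ k * (-1) ^ (n - k + j) := by
    rw [← pow_add]
    congr 1
    omega
  have hdesc : (n.descFactorial k : ℚ) ≠ 0 := by
    exact_mod_cast (Nat.descFactorial_pos.mpr hk).ne'
  rw [hsign, ← hfac]
  field_simp

theorem derivative_signedD3Egf_succ (j : ℕ) :
    d⁄dX ℚ (signedD3Egf (j + 1)) = d⁄dX ℚ truncLog * signedD3Egf j := by
  ext n
  rw [coeff_derivative, signedD3Egf, coeff_mk, coeff_mul,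
    Nat.sum_antidiagonal_eq_sum_range_succ fun k l => coeff k (d⁄dX ℚ truncLog) * coeff l _,
    d3_succ_succ]
  have hnorm (x : ℚ) : (-1) ^ (n + 1 + (j + 1)) * x / (n + 1).factorial * (n + 1) =
      (-1) ^ (n + j) * x / n.factorial := by
    rw [Nat.factorial_succ, show n + 1 + (j + 1) = n + j + 2 by ring, pow_add]
    push_cast
    field_simp
  rw [hnorm, Nat.cast_sum, mul_sum, sum_div]
  refine sum_congr rfl fun k hk => ?_
  rw [coeff_derivative_truncLog, signedD3Egf, coeff_mk]
  split_ifs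
  · push_cast
    exact neg_one_pow_mul_descFactorial_div_factorial (by simp at hk; omega) j _
  · simp

/-- `(log(1+x) - x + x²/2)^j / j! = Σ_l (-1)^{l-j} d₃(l,j) x^l/l!` as formal power series
(the sign `(-1)^{l-j}` is written `(-1)^{l+j}`, which agrees with it, and
`d₃(l,j) = 0` for `l < 3j`). -/
theorem pow_truncLog_eq_egf_d3 (j : ℕ) :
    PowerSeries.C (R := ℚ) (1 / (Nat.factorial j)) *
        (logOneAdd - PowerSeries.X + (1/2 : ℚ) • PowerSeries.X ^ 2) ^ j =
      PowerSeries.mk fun l => (-1 : ℚ) ^ (l + j) * (d3 l j : ℚ) / (Nat.factorial l) := by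
  change C (1 / j.factorial : ℚ) * truncLog ^ j = signedD3Egf j
  induction j with
  | zero => simp [signedD3Egf_zero]
  | succ j ih =>
    refine derivative.ext ?_ ?_
    · rw [derivative_C_inv_factorial_mul_pow_succ, ih, derivative_signedD3Egf_succ]
    · rw [constantCoeff_signedD3Egf_succ, map_mul, map_pow, constantCoeff_truncLog,
        zero_pow j.succ_ne_zero, mul_zero]
end

section
/- With B(x) and C(x) the compositional inverses of (2e^x-2-2x)^{1/2} and (-2log(1+x)+2x)^{1/2} respectively, one has C(x) - B(x) = x²/2 as formal power series; in particular the coefficients of B and C agree in every degree except degree 2. -/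
/-!
Since `log (1 + x) ∘ (eˣ - 1) = x` (both sides have derivative `1` and vanish at `0`), the
series `R_C ∘ (eˣ - 1)` squares to `2eˣ - 2 - 2x` and has linear coefficient `1`, so it is
`R_B`. Then `R_C ∘ ((eˣ - 1) ∘ B) = R_B ∘ B = x`, and since `C` is a left inverse of `R_C`
this forces `C = e^B - 1`. Substituting `B` into `R_B² = 2eˣ - 2 - 2x` gives
`x² = 2(C + 1) - 2 - 2B`.
-/

/-- Composition `f ∘ g` of formal power series (intended for `g` with zero constant term). -/
noncomputable def pcomp {A : Type*} [CommRing A] (f g : PowerSeries A) : PowerSeries A :=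
  PowerSeries.mk fun n =>
    PowerSeries.coeff (R := A) n
      (∑ k ∈ Finset.range (n + 1), PowerSeries.C (R := A) (PowerSeries.coeff (R := A) k f) * g ^ k)

namespace PowerSeries

variable {A : Type*} [CommRing A]

theorem coeff_pow_eq_zero_of_lt {g : A⟦X⟧} (hg : constantCoeff g = 0) {n k : ℕ}
    (hnk : n < k) : coeff n (g ^ k) = 0 :=
  coeff_of_lt_order n <|
    (Nat.cast_lt.mpr hnk).trans_le (le_order_pow_of_constantCoeff_eq_zero k hg)

theorem one_add_X_mul_derivative_log [Algebra ℚ A] : (1 + X) * d⁄dX A (log A) = 1 := by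
  ext n
  rcases n with _ | n
  · simp [deriv_log]
  · rw [add_mul, one_mul, map_add, coeff_succ_X_mul, deriv_log]
    simp [coeff_one, pow_succ]

theorem log_subst_exp_sub_one [Algebra ℚ A] [IsAddTorsionFree A] :
    (log A).subst (exp A - 1) = X := by
  have hE : HasSubst (exp A - 1) := HasSubst.exp_sub_one
  apply derivative.ext
  · have h := congrArg (substAlgHom hE) (one_add_X_mul_derivative_log (A := A))
    rw [map_mul, map_add, map_one, coe_substAlgHom, subst_X hE] at h
    rw [derivative_subst hE, map_sub, derivative_exp, Derivation.map_one_eq_zero, sub_zero,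
      derivative_X]
    linear_combination h
  · rw [constantCoeff_X]
    exact constantCoeff_subst_eq_zero
      (by rw [map_sub, ← constantCoeff_eq, constantCoeff_exp, map_one, sub_self]) _
      constantCoeff_log

theorem eq_of_sq_eq_sq_of_coeff_one_eq_one [IsDomain A] [NeZero (2 : A)] {S T : A⟦X⟧}
    (h : S ^ 2 = T ^ 2) (hS : coeff 1 S = 1) (hT : coeff 1 T = 1) : S = T := by
  refine (sq_eq_sq_iff_eq_or_eq_neg.mp h).resolve_right fun hneg => NeZero.ne (2 : A) ?_
  have h1 := congrArg (coeff 1) hneg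
  rw [map_neg, hS, hT] at h1
  linear_combination h1

theorem eq_of_subst_eq_X {f g h : A⟦X⟧} (hg : constantCoeff g = 0) (hh : constantCoeff h = 0)
    (hfg : f.subst g = X) (hgh : g.subst h = X) : f = h := by
  have hg' : HasSubst g := HasSubst.of_constantCoeff_zero' hg
  have hh' : HasSubst h := HasSubst.of_constantCoeff_zero' hh
  calc f = subst (subst h g) f := by rw [hgh, X_subst]
    _ = subst h (subst g f) := (subst_comp_subst_apply hg' hh' f).symm
    _ = h := by rw [hfg, subst_X hh']

end PowerSeries

open PowerSeries

theorem pcomp_eq_subst {A : Type*} [CommRing A] (f : A⟦X⟧) {g : A⟦X⟧}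
    (hg : constantCoeff g = 0) : pcomp f g = f.subst g := by
  ext n
  rw [coeff_subst' (HasSubst.of_constantCoeff_zero' hg),
    finsum_eq_sum_of_support_subset (s := Finset.range (n + 1))]
  · simp [pcomp, map_sum, coeff_C_mul, smul_eq_mul]
  · intro d hd
    by_contra hdn
    simp only [Finset.coe_range, Set.mem_Iio, not_lt] at hdn
    exact hd (by simp [coeff_pow_eq_zero_of_lt hg (Nat.lt_of_succ_le hdn)])

theorem PowerSeries.coeff_one_subst {A : Type*} [CommRing A] (f : A⟦X⟧) {g : A⟦X⟧}
    (hg : constantCoeff g = 0) : coeff 1 (f.subst g) = coeff 1 f * coeff 1 g := by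
  rw [← pcomp_eq_subst f hg]
  simp [pcomp, Finset.sum_range_succ, coeff_C_mul]

theorem subst_exp_sub_one_eq_of_sq {K : Type*} [Field K] [CharZero K] {RB RC : K⟦X⟧}
    (hRBsq : RB ^ 2 = 2 * exp K - 2 - 2 * X) (hRB1 : coeff 1 RB = 1)
    (hRCsq : RC ^ 2 = -2 * log K + 2 * X) (hRC1 : coeff 1 RC = 1) :
    RC.subst (exp K - 1) = RB := by
  have hE0 : constantCoeff (exp K - 1) = 0 := by simp
  have hE : HasSubst (exp K - 1) := HasSubst.exp_sub_one
  refine eq_of_sq_eq_sq_of_coeff_one_eq_one ?_ ?_ hRB1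
  · rw [← subst_pow hE, hRCsq, hRBsq, ← coe_substAlgHom hE]
    simp only [map_add, map_mul, map_neg, map_ofNat]
    rw [coe_substAlgHom, log_subst_exp_sub_one, subst_X hE]
    ring
  · rw [coeff_one_subst _ hE0, hRC1]
    simp [coeff_exp]

theorem logOneAdd_eq_log : logOneAdd = log ℚ := by
  ext n
  simp [logOneAdd]

theorem inverse_series_differ_by_sq_general (RB RC B C : PowerSeries ℚ)
    (hRBsq : RB ^ 2 = 2 * PowerSeries.exp ℚ - 2 - 2 * PowerSeries.X)
    (hRB1 : PowerSeries.coeff (R := ℚ) 1 RB = 1)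
    (hRCsq : RC ^ 2 = -2 * logOneAdd + 2 * PowerSeries.X)
    (hRC0 : PowerSeries.constantCoeff (R := ℚ) RC = 0)
    (hRC1 : PowerSeries.coeff (R := ℚ) 1 RC = 1)
    (hB0 : PowerSeries.constantCoeff (R := ℚ) B = 0)
    (hRBB : pcomp RB B = PowerSeries.X)
    (hCRC : pcomp C RC = PowerSeries.X) :
    C - B = (1/2 : ℚ) • PowerSeries.X ^ 2 ∧
      ∀ n : ℕ, n ≠ 2 → PowerSeries.coeff (R := ℚ) n C = PowerSeries.coeff (R := ℚ) n B := by
  rw [pcomp_eq_subst _ hB0] at hRBB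
  rw [pcomp_eq_subst _ hRC0] at hCRC
  have hE0 : constantCoeff (exp ℚ - 1) = 0 := by simp
  have hE : HasSubst (exp ℚ - 1) := HasSubst.exp_sub_one
  have hB : HasSubst B := HasSubst.of_constantCoeff_zero' hB0
  have hRC_exp : RC.subst (exp ℚ - 1) = RB :=
    subst_exp_sub_one_eq_of_sq hRBsq hRB1 (logOneAdd_eq_log ▸ hRCsq) hRC1
  have hC : C = subst B (exp ℚ) - 1 := by
    have hRC_EB : RC.subst (subst B (exp ℚ - 1)) = X := by
      rw [← subst_comp_subst_apply hE hB, hRC_exp, hRBB]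
    rw [eq_of_subst_eq_X hRC0 (constantCoeff_subst_eq_zero hB0 _ hE0) hCRC hRC_EB, subst_sub hB,
      ← coe_substAlgHom hB, map_one]
  have hX_sq : X ^ 2 = 2 * subst B (exp ℚ) - 2 - 2 * B := by
    simpa only [map_pow, map_sub, map_mul, map_ofNat, coe_substAlgHom, hRBB, subst_X hB] using
      congrArg (substAlgHom hB) hRBsq
  have hmain : C - B = (1/2 : ℚ) • X ^ 2 := by
    have h2 : PowerSeries.C (1/2 : ℚ) * 2 = 1 := by
      rw [← map_ofNat PowerSeries.C 2, ← map_mul]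
      norm_num
    rw [hX_sq, hC, smul_eq_C_mul]
    linear_combination (1 + B - subst B (exp ℚ)) * h2
  refine ⟨hmain, fun n hn => ?_⟩
  simpa [coeff_X_pow, hn, sub_eq_zero] using congrArg (coeff n) hmain

/-- With `B` and `C` the compositional inverses of `(2e^x-2-2x)^{1/2}` and
`(-2log(1+x)+2x)^{1/2}` respectively (square roots with vanishing constant term and unit
linear coefficient), `C(x) - B(x) = x²/2`; in particular the coefficients of `B` and `C`
agree in every degree except degree `2`. -/
theorem inverse_series_differ_by_sq (RB RC B C : PowerSeries ℚ)
    (hRBsq : RB ^ 2 = 2 * PowerSeries.exp ℚ - 2 - 2 * PowerSeries.X)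
    (hRB0 : PowerSeries.constantCoeff (R := ℚ) RB = 0)
    (hRB1 : PowerSeries.coeff (R := ℚ) 1 RB = 1)
    (hRCsq : RC ^ 2 = -2 * logOneAdd + 2 * PowerSeries.X)
    (hRC0 : PowerSeries.constantCoeff (R := ℚ) RC = 0)
    (hRC1 : PowerSeries.coeff (R := ℚ) 1 RC = 1)
    (hB0 : PowerSeries.constantCoeff (R := ℚ) B = 0)
    (hBRB : pcomp B RB = PowerSeries.X) (hRBB : pcomp RB B = PowerSeries.X)
    (hC0 : PowerSeries.constantCoeff (R := ℚ) C = 0)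
    (hCRC : pcomp C RC = PowerSeries.X) (hRCC : pcomp RC C = PowerSeries.X) :
    C - B = (1/2 : ℚ) • PowerSeries.X ^ 2 ∧
      ∀ n : ℕ, n ≠ 2 → PowerSeries.coeff (R := ℚ) n C = PowerSeries.coeff (R := ℚ) n B :=
  inverse_series_differ_by_sq_general RB RC B C hRBsq hRB1 hRCsq hRC0 hRC1 hB0 hRBB hCRC
end
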